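/- Let m, n ≥ 1 and let B¹,…,Bⁿ be m×m real matrices, each skew-symmetric and orthogonal, with BⁱBʲ = −BʲBⁱ for i ≠ j. Let d(x,t) = (‖x‖⁴ + 16‖t‖²)^{1/4} on ℝᵐ × ℝⁿ and let A = (a_{ij}) be an m×m symmetric matrix-valued function. Then for every p = (x,t) ≠ (0,0), L_A d(p) = (1/d(p)) ⟨(Tr(A(p))·I_m − 3A(p)) ∇_H d(p), ∇_H d(p)⟩ + (2/d(p)³) ( ⟨A(p)x, x⟩ + Σ_{k=1}^n ⟨A(p)Bᵏx, Bᵏx⟩ ), where L_A u = Σ_{i,j=1}^m a_{ij} X_iX_j u, X_j u(x,t) = ∂_{x_j}u(x,t) + ½Σ_{k=1}^n (Bᵏx)_j ∂_{t_k}u(x,t), and ∇_H d = (X₁d,…,X_m d). -/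

import Mathlib

open Matrix MeasureTheory
open scoped BigOperators

noncomputable section

/-- The underlying space of the prototype H-type group: `ℝᵐ × ℝⁿ`. -/
abbrev G (m n : ℕ) : Type := (Fin m → ℝ) × (Fin n → ℝ)

/-- Squared Euclidean norm on `ℝᵏ`. -/
def sqnorm {k : ℕ} (x : Fin k → ℝ) : ℝ := ∑ i, x i ^ 2

/-- The homogeneous norm `d(x,t) = (‖x‖⁴ + 16‖t‖²)^(1/4)`. -/
def hnorm {m n : ℕ} (p : G m n) : ℝ := (sqnorm p.1 ^ 2 + 16 * sqnorm p.2) ^ (4⁻¹ : ℝ)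

/-- The group law `(x,t)∘(y,s) = (x+y, t+s+½⟨Bᵏx,y⟩)`. -/
def gmul {m n : ℕ} (B : Fin n → Matrix (Fin m) (Fin m) ℝ) (p q : G m n) : G m n :=
  (p.1 + q.1, fun k => p.2 k + q.2 k + (1 / 2) * ((B k).mulVec p.1 ⬝ᵥ q.1))

/-- The group inverse `p⁻¹ = -p`. -/
def ginv {m n : ℕ} (p : G m n) : G m n := (-p.1, -p.2)

/-- The `d`-ball `B_R(p) = {q : d(p⁻¹∘q) < R}`. -/
def dball {m n : ℕ} (B : Fin n → Matrix (Fin m) (Fin m) ℝ) (p : G m n) (R : ℝ) :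
    Set (G m n) := {q | hnorm (gmul B (ginv p) q) < R}

/-- The vector of the horizontal field `X_j` at `p`:
`X_j = ∂_{x_j} + ½ Σ_k (Bᵏx)_j ∂_{t_k}`. -/
def Xvec {m n : ℕ} (B : Fin n → Matrix (Fin m) (Fin m) ℝ) (j : Fin m) (p : G m n) : G m n :=
  (fun i => if i = j then 1 else 0, fun k => (1 / 2) * (B k).mulVec p.1 j)

/-- The horizontal derivative `X_j u (p)`. -/
def Xop {m n : ℕ} (B : Fin n → Matrix (Fin m) (Fin m) ℝ) (j : Fin m) (u : G m n → ℝ)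
    (p : G m n) : ℝ := fderiv ℝ u p (Xvec B j p)

/-- The horizontally elliptic operator `L_A u = Σ_{i,j} a_{ij} X_i X_j u`. -/
def Lop {m n : ℕ} (B : Fin n → Matrix (Fin m) (Fin m) ℝ)
    (A : G m n → Matrix (Fin m) (Fin m) ℝ) (u : G m n → ℝ) (p : G m n) : ℝ :=
  ∑ i, ∑ j, A p i j * Xop B i (Xop B j u) p

/-- The defining conditions on the matrices `B¹,…,Bⁿ` of a prototype H-type group:
skew-symmetric, orthogonal, pairwise anticommuting. -/
def HTypeData {m n : ℕ} (B : Fin n → Matrix (Fin m) (Fin m) ℝ) : Prop :=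
  (∀ k, (B k)ᵀ = -(B k)) ∧ (∀ k, (B k)ᵀ * B k = 1) ∧
    (∀ i j, i ≠ j → B i * B j = -(B j * B i))

/-- The quadratic form `⟨Aξ, ξ⟩`. -/
def quadForm {m : ℕ} (A : Matrix (Fin m) (Fin m) ℝ) (ξ : Fin m → ℝ) : ℝ :=
  A.mulVec ξ ⬝ᵥ ξ

/-- Uniform ellipticity: `λ‖ξ‖² ≤ ⟨Aξ,ξ⟩ ≤ Λ‖ξ‖²`. -/
def UnifElliptic {m : ℕ} (lam Lam : ℝ) (A : Matrix (Fin m) (Fin m) ℝ) : Prop :=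
  ∀ ξ : Fin m → ℝ, lam * sqnorm ξ ≤ quadForm A ξ ∧ quadForm A ξ ≤ Lam * sqnorm ξ

/-- The δ-Landis condition
`Tr(A) + (Q+2−m)·max_{‖ξ‖=1}⟨Aξ,ξ⟩ ≤ (Q+4−δ)·min_{‖ξ‖=1}⟨Aξ,ξ⟩`,
stated equivalently via universal quantification over unit vectors. -/
def Landis {m : ℕ} (Q δ : ℝ) (A : Matrix (Fin m) (Fin m) ℝ) : Prop :=
  ∀ ξ ζ : Fin m → ℝ, sqnorm ξ = 1 → sqnorm ζ = 1 →
    A.trace + (Q + 2 - m) * quadForm A ξ ≤ (Q + 4 - δ) * quadForm A ζ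

/-- `φ = d⁴`. -/
def phi {m n : ℕ} (p : G m n) : ℝ := sqnorm p.1 ^ 2 + 16 * sqnorm p.2

/-! With `φ = d⁴` one has `X_j φ = 4 g_j` for `g = |x|² x + 4 Σₖ tₖ Bᵏx`, hence `∇_H d = g / d³` and
`X_i X_j d = X_i g_j / d³ - 3 g_i g_j / d⁷`. Contracting with `A`, the terms `tₖ tr(A Bᵏ)` vanish
since `A` is symmetric and `Bᵏ` skew, and the H-type relations give `|g|² = |x|² d⁴`, which turns
`Tr(A) |x|² / d³` and `⟨A g, g⟩ / d⁷` into the quadratic forms in `∇_H d` of the formula. -/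

open Filter Topology

variable {m n : ℕ}

theorem sqnorm_nonneg {k : ℕ} (x : Fin k → ℝ) : 0 ≤ sqnorm x :=
  Finset.sum_nonneg fun i _ => sq_nonneg (x i)

theorem sqnorm_eq_dotProduct {k : ℕ} (x : Fin k → ℝ) : sqnorm x = x ⬝ᵥ x := by
  simp [sqnorm, dotProduct, sq]

theorem sqnorm_eq_zero_iff {k : ℕ} {x : Fin k → ℝ} : sqnorm x = 0 ↔ x = 0 := by
  rw [sqnorm_eq_dotProduct, dotProduct_self_eq_zero]

@[fun_prop]
theorem differentiable_sqnorm {k : ℕ} : Differentiable ℝ (sqnorm : (Fin k → ℝ) → ℝ) := by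
  unfold sqnorm; fun_prop

@[fun_prop]
theorem differentiable_mulVec {ι κ : Type*} [Fintype κ] (M : Matrix ι κ ℝ) :
    Differentiable ℝ (fun x : κ → ℝ => M *ᵥ x) := by
  unfold mulVec dotProduct; fun_prop

section HorizontalCalculus

variable (B : Fin n → Matrix (Fin m) (Fin m) ℝ) (j : Fin m) {u v : G m n → ℝ} {p : G m n}

theorem Xop_of_hasFDerivAt {L : G m n →L[ℝ] ℝ} (h : HasFDerivAt u L p) :
    Xop B j u p = L (Xvec B j p) := by
  rw [Xop, h.fderiv]

theorem Xop_comp_of_hasDerivAt {f : ℝ → ℝ} {f' : ℝ} (hf : HasDerivAt f f' (u p))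
    (hu : DifferentiableAt ℝ u p) : Xop B j (fun q => f (u q)) p = f' * Xop B j u p := by
  change Xop B j (f ∘ u) p = _
  rw [Xop_of_hasFDerivAt B j (hf.comp_hasFDerivAt p hu.hasFDerivAt), Xop]
  simp

theorem Xop_add (hu : DifferentiableAt ℝ u p) (hv : DifferentiableAt ℝ v p) :
    Xop B j (fun q => u q + v q) p = Xop B j u p + Xop B j v p := by
  simp [Xop, fderiv_fun_add hu hv]

theorem Xop_const_mul (c : ℝ) (hu : DifferentiableAt ℝ u p) :
    Xop B j (fun q => c * u q) p = c * Xop B j u p := by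
  simp [Xop, fderiv_const_mul hu]

theorem Xop_mul (hu : DifferentiableAt ℝ u p) (hv : DifferentiableAt ℝ v p) :
    Xop B j (fun q => u q * v q) p = u p * Xop B j v p + v p * Xop B j u p := by
  simp [Xop, fderiv_fun_mul hu hv]

theorem Xop_sum {ι : Type*} (s : Finset ι) {w : ι → G m n → ℝ}
    (hw : ∀ i ∈ s, DifferentiableAt ℝ (w i) p) :
    Xop B j (fun q => ∑ i ∈ s, w i q) p = ∑ i ∈ s, Xop B j (w i) p := by
  simp [Xop, fderiv_fun_sum hw]

theorem Xop_pow (k : ℕ) (hu : DifferentiableAt ℝ u p) :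
    Xop B j (fun q => u q ^ k) p = k * u p ^ (k - 1) * Xop B j u p := by
  simp [Xop, fderiv_fun_pow k hu]

theorem Xop_div (hu : DifferentiableAt ℝ u p) (hv : DifferentiableAt ℝ v p) (hv0 : v p ≠ 0) :
    Xop B j (fun q => u q / v q) p = (Xop B j u p * v p - u p * Xop B j v p) / v p ^ 2 := by
  simp only [div_eq_mul_inv]
  rw [Xop_mul B j (v := fun q => (v q)⁻¹) hu (hv.inv hv0),
    Xop_comp_of_hasDerivAt B j (hasDerivAt_inv hv0) hv]
  field_simp
  ring

theorem Xop_fst_apply (i : Fin m) : Xop B j (fun q => q.1 i) p = if i = j then 1 else 0 := by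
  refine (Xop_of_hasFDerivAt B j ((hasFDerivAt_apply i p.1).comp p hasFDerivAt_fst)).trans ?_
  simp [Xvec]

theorem Xop_snd_apply (k : Fin n) : Xop B j (fun q => q.2 k) p = (B k *ᵥ p.1) j / 2 := by
  refine (Xop_of_hasFDerivAt B j ((hasFDerivAt_apply k p.2).comp p hasFDerivAt_snd)).trans ?_
  simp only [Xvec, one_div, ContinuousLinearMap.comp_apply, ContinuousLinearMap.coe_snd',
    ContinuousLinearMap.proj_apply]
  ring

theorem Xop_mulVec_fst_apply (M : Matrix (Fin m) (Fin m) ℝ) (i : Fin m) :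
    Xop B j (fun q => (M *ᵥ q.1) i) p = M i j := by
  simp only [mulVec, dotProduct]
  simp (disch := fun_prop) [Xop_sum, Xop_const_mul, Xop_fst_apply]

theorem Xop_sqnorm_fst : Xop B j (fun q => sqnorm q.1) p = 2 * p.1 j := by
  simp only [sqnorm]
  simp (disch := fun_prop) [Xop_sum, Xop_pow, Xop_fst_apply]

theorem Xop_sqnorm_snd : Xop B j (fun q => sqnorm q.2) p = ∑ k, p.2 k * (B k *ᵥ p.1) j := by
  simp only [sqnorm]
  simp (disch := fun_prop) only [Xop_sum, Xop_pow, Nat.cast_ofNat, Nat.add_one_sub_one, pow_one,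
    Xop_snd_apply]
  exact Finset.sum_congr rfl fun k _ => by ring

end HorizontalCalculus

def gaugeVec (B : Fin n → Matrix (Fin m) (Fin m) ℝ) (p : G m n) : Fin m → ℝ :=
  sqnorm p.1 • p.1 + (4 : ℝ) • ∑ k, p.2 k • B k *ᵥ p.1

section Gauge

variable (B : Fin n → Matrix (Fin m) (Fin m) ℝ) {p : G m n}

theorem gaugeVec_apply (p : G m n) (j : Fin m) :
    gaugeVec B p j = sqnorm p.1 * p.1 j + 4 * ∑ k, p.2 k * (B k *ᵥ p.1) j := by
  simp [gaugeVec, Finset.sum_apply]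

theorem differentiableAt_gaugeVec_apply (j : Fin m) :
    DifferentiableAt ℝ (fun q => gaugeVec B q j) p := by
  simp only [gaugeVec_apply]
  fun_prop

theorem Xop_phi (j : Fin m) : Xop B j phi p = 4 * gaugeVec B p j := by
  unfold phi
  simp (disch := fun_prop) only [Xop_add, Xop_pow, Nat.cast_ofNat, Nat.add_one_sub_one, pow_one,
    Xop_sqnorm_fst, Xop_const_mul, Xop_sqnorm_snd, gaugeVec_apply]
  ring

theorem Xop_gaugeVec_apply (i j : Fin m) :
    Xop B i (fun q => gaugeVec B q j) p =
      sqnorm p.1 * (if j = i then 1 else 0) + 2 * (p.1 i * p.1 j) + 4 * ∑ k, p.2 k * B k j i +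
        2 * ∑ k, (B k *ᵥ p.1) i * (B k *ᵥ p.1) j := by
  simp only [gaugeVec_apply]
  simp (disch := fun_prop) [Xop_add, Xop_const_mul, Xop_mul, Xop_sum, Xop_sqnorm_fst,
    Xop_fst_apply, Xop_snd_apply, Xop_mulVec_fst_apply]
  rw [Finset.sum_add_distrib, mul_add]
  have hhalf : 4 * ∑ k, (B k *ᵥ p.1) j * ((B k *ᵥ p.1) i / 2) =
      2 * ∑ k, (B k *ᵥ p.1) i * (B k *ᵥ p.1) j := by
    simp only [Finset.mul_sum]
    exact Finset.sum_congr rfl fun k _ => by ring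
  rw [hhalf]
  ring

theorem phi_nonneg (p : G m n) : 0 ≤ phi p := by
  have := sqnorm_nonneg p.2
  unfold phi
  positivity

theorem phi_pos (hp : p ≠ 0) : 0 < phi p := by
  have hx := sqnorm_nonneg p.1
  have ht := sqnorm_nonneg p.2
  refine (phi_nonneg p).lt_of_ne fun h => hp ?_
  have ht0 : sqnorm p.2 = 0 := by unfold phi at h; nlinarith
  have hx0 : sqnorm p.1 = 0 := by unfold phi at h; nlinarith
  exact Prod.ext (sqnorm_eq_zero_iff.1 hx0) (sqnorm_eq_zero_iff.1 ht0)

theorem hnorm_pos (hp : p ≠ 0) : 0 < hnorm p :=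
  Real.rpow_pos_of_pos (phi_pos hp) _

theorem hnorm_pow_four (p : G m n) : hnorm p ^ 4 = phi p := by
  have h := Real.rpow_inv_natCast_pow (n := 4) (phi_nonneg p) (by norm_num)
  exact_mod_cast h

theorem differentiableAt_hnorm (hp : p ≠ 0) : DifferentiableAt ℝ hnorm p := by
  have : DifferentiableAt ℝ phi p := by unfold phi; fun_prop
  exact this.rpow_const (Or.inl (phi_pos hp).ne')

theorem Xop_hnorm (hp : p ≠ 0) (j : Fin m) : Xop B j hnorm p = gaugeVec B p j / hnorm p ^ 3 := by
  have hφ := phi_pos hp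
  change Xop B j (fun q => phi q ^ (4⁻¹ : ℝ)) p = _
  rw [Xop_comp_of_hasDerivAt B j (Real.hasDerivAt_rpow_const (Or.inl hφ.ne'))
    (by unfold phi; fun_prop), Xop_phi, Real.rpow_sub_one hφ.ne']
  change 4⁻¹ * (hnorm p / phi p) * _ = _
  rw [← hnorm_pow_four]
  field_simp

theorem Xop_Xop_hnorm (hp : p ≠ 0) (i j : Fin m) :
    Xop B i (Xop B j hnorm) p =
      Xop B i (fun q => gaugeVec B q j) p / hnorm p ^ 3 -
        3 * (gaugeVec B p i * gaugeVec B p j) / hnorm p ^ 7 := by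
  have hd := hnorm_pos hp
  have hnear : Xop B j hnorm =ᶠ[𝓝 p] fun q => gaugeVec B q j / hnorm q ^ 3 := by
    filter_upwards [isOpen_ne.mem_nhds hp] with q hq using Xop_hnorm B hq j
  rw [Xop, hnear.fderiv_eq, ← Xop,
    Xop_div B i (v := fun q => hnorm q ^ 3) (differentiableAt_gaugeVec_apply B j)
      ((differentiableAt_hnorm hp).pow 3) (by positivity),
    Xop_pow B i 3 (differentiableAt_hnorm hp), Xop_hnorm B hp]
  field_simp
  ring

end Gauge

section HType

theorem mulVec_dotProduct_self_of_transpose_eq_neg {ι : Type*} [Fintype ι] {M : Matrix ι ι ℝ}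
    (hM : Mᵀ = -M) (x : ι → ℝ) : M *ᵥ x ⬝ᵥ x = 0 := by
  have h : M *ᵥ x ⬝ᵥ x = -(M *ᵥ x ⬝ᵥ x) := by
    conv_lhs => rw [dotProduct_comm, dotProduct_mulVec, ← mulVec_transpose, hM, neg_mulVec,
      neg_dotProduct]
  linarith

theorem trace_mul_eq_zero_of_isSymm_of_transpose_eq_neg {ι : Type*} [Fintype ι]
    {A M : Matrix ι ι ℝ} (hA : A.IsSymm) (hM : Mᵀ = -M) : (A * M).trace = 0 := by
  have h : (A * M).trace = -(A * M).trace := by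
    conv_lhs => rw [← trace_transpose, transpose_mul, hM, hA.eq, neg_mul, trace_neg,
      trace_mul_comm]
  linarith

variable {B : Fin n → Matrix (Fin m) (Fin m) ℝ}

theorem sum_smul_mulVec_dotProduct_self (hB : ∀ k, (B k)ᵀ = -B k) (t : Fin n → ℝ)
    (x : Fin m → ℝ) : (∑ k, t k • B k *ᵥ x) ⬝ᵥ x = 0 := by
  simp [sum_dotProduct, mulVec_dotProduct_self_of_transpose_eq_neg (hB _)]

theorem HTypeData.mulVec_dotProduct_mulVec (hB : HTypeData B) (x : Fin m → ℝ) (k l : Fin n) :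
    B k *ᵥ x ⬝ᵥ B l *ᵥ x = if k = l then sqnorm x else 0 := by
  obtain ⟨hskew, horth, hanti⟩ := hB
  rw [dotProduct_comm, dotProduct_mulVec, ← mulVec_transpose, mulVec_mulVec]
  split_ifs with h
  · rw [h, horth, one_mulVec, sqnorm_eq_dotProduct]
  · refine mulVec_dotProduct_self_of_transpose_eq_neg ?_ x
    rw [transpose_mul, transpose_transpose, hskew l, hskew k, neg_mul, neg_mul, neg_neg,
      hanti l k (Ne.symm h), neg_neg]

theorem HTypeData.sqnorm_sum_smul_mulVec (hB : HTypeData B) (t : Fin n → ℝ) (x : Fin m → ℝ) :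
    sqnorm (∑ k, t k • B k *ᵥ x) = sqnorm t * sqnorm x := by
  simp only [sqnorm_eq_dotProduct, dotProduct_sum, dotProduct_smul, sum_dotProduct, smul_dotProduct,
    hB.mulVec_dotProduct_mulVec, smul_eq_mul, mul_ite, mul_zero, Finset.sum_ite_eq',
    Finset.mem_univ, if_true]
  simp_rw [← mul_assoc, ← Finset.sum_mul]
  rfl

theorem HTypeData.sqnorm_gaugeVec (hB : HTypeData B) (p : G m n) :
    sqnorm (gaugeVec B p) = sqnorm p.1 * phi p := by
  have hw := sum_smul_mulVec_dotProduct_self hB.1 p.2 p.1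
  have hww := hB.sqnorm_sum_smul_mulVec p.2 p.1
  rw [sqnorm_eq_dotProduct] at hww
  simp only [sqnorm_eq_dotProduct, gaugeVec, add_dotProduct, dotProduct_add, smul_dotProduct,
    dotProduct_smul, dotProduct_comm p.1 (∑ k, _), hw, hww, phi, smul_eq_mul]
  ring

end HType

theorem quadForm_eq_sum (A : Matrix (Fin m) (Fin m) ℝ) (x : Fin m → ℝ) :
    quadForm A x = ∑ i, ∑ j, A i j * (x i * x j) := by
  simp only [quadForm, dotProduct, mulVec, Finset.sum_mul]
  exact Finset.sum_congr rfl fun i _ => Finset.sum_congr rfl fun j _ => by ring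

theorem sum_mul_Xop_gaugeVec_apply {B : Fin n → Matrix (Fin m) (Fin m) ℝ}
    (hB : ∀ k, (B k)ᵀ = -B k) {A : Matrix (Fin m) (Fin m) ℝ} (hA : A.IsSymm) (p : G m n) :
    ∑ i, ∑ j, A i j * Xop B i (fun q => gaugeVec B q j) p =
      A.trace * sqnorm p.1 + 2 * (quadForm A p.1 + ∑ k, quadForm A (B k *ᵥ p.1)) := by
  have hpull : ∀ (c : ℝ) (f : Fin m → Fin m → ℝ),
      ∑ i, ∑ j, A i j * (c * f i j) = c * ∑ i, ∑ j, A i j * f i j := fun c f => by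
    simp_rw [mul_left_comm (A _ _), ← Finset.mul_sum]
  have hcomm : ∀ f : Fin n → Fin m → Fin m → ℝ,
      ∑ i, ∑ j, A i j * ∑ k, f k i j = ∑ k, ∑ i, ∑ j, A i j * f k i j := fun f => by
    simp_rw [Finset.mul_sum]
    rw [Finset.sum_congr rfl fun i _ => Finset.sum_comm, Finset.sum_comm]
  have htrace : ∑ i, ∑ j, A i j * (if j = i then 1 else 0) = A.trace := by
    simp [trace]
  have hskew : ∑ i, ∑ j, A i j * ∑ k, p.2 k * B k j i = 0 := by
    rw [hcomm]
    refine Finset.sum_eq_zero fun k _ => ?_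
    rw [hpull, ← mul_zero (p.2 k), ← trace_mul_eq_zero_of_isSymm_of_transpose_eq_neg hA (hB k)]
    simp [trace, mul_apply]
  simp only [Xop_gaugeVec_apply, mul_add, Finset.sum_add_distrib, hpull, htrace, hskew, hcomm,
    ← quadForm_eq_sum]
  ring

theorem Lop_of_homogeneous_norm_general
    (m n : ℕ)
    (B : Fin n → Matrix (Fin m) (Fin m) ℝ) (hB : HTypeData B)
    (A : G m n → Matrix (Fin m) (Fin m) ℝ) (hA : ∀ p, (A p).IsSymm) :
    ∀ p : G m n, p ≠ 0 →
      Lop B A hnorm p =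
        (1 / hnorm p) *
          (((A p).trace • (1 : Matrix (Fin m) (Fin m) ℝ) - (3 : ℝ) • A p).mulVec
              (fun j => Xop B j hnorm p) ⬝ᵥ (fun j => Xop B j hnorm p)) +
        (2 / hnorm p ^ 3) *
          (quadForm (A p) p.1 + ∑ k, quadForm (A p) ((B k).mulVec p.1)) := by
  intro p hp
  have hd := hnorm_pos hp
  have hgrad : (fun j => Xop B j hnorm p) = (hnorm p ^ 3)⁻¹ • gaugeVec B p :=
    funext fun j => by simp [Xop_hnorm B hp, div_eq_inv_mul]
  have hLop : Lop B A hnorm p =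
      (∑ i, ∑ j, A p i j * Xop B i (fun q => gaugeVec B q j) p) / hnorm p ^ 3 -
        3 * quadForm (A p) (gaugeVec B p) / hnorm p ^ 7 := by
    simp only [Lop, Xop_Xop_hnorm B hp, quadForm_eq_sum, mul_sub, Finset.sum_sub_distrib,
      Finset.sum_div, Finset.mul_sum, mul_div_assoc', mul_left_comm (A p _ _) (3 : ℝ)]
  rw [hLop, sum_mul_Xop_gaugeVec_apply hB.1 (hA p), hgrad]
  unfold quadForm
  simp only [sub_mulVec, smul_mulVec, one_mulVec, mulVec_smul, sub_dotProduct, smul_dotProduct,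
    dotProduct_smul, ← sqnorm_eq_dotProduct, hB.sqnorm_gaugeVec, ← hnorm_pow_four,
    smul_eq_mul]
  field_simp
  ring

/-- formula `(Lad)`. For `p = (x,t) ≠ 0`,
`L_A d(p) = (1/d(p))⟨(Tr(A(p))I − 3A(p))∇_H d(p), ∇_H d(p)⟩
  + (2/d(p)³)(⟨A(p)x,x⟩ + Σ_k ⟨A(p)Bᵏx, Bᵏx⟩)`. -/
theorem Lop_of_homogeneous_norm
    (m n : ℕ) (hm : 1 ≤ m) (hn : 1 ≤ n)
    (B : Fin n → Matrix (Fin m) (Fin m) ℝ) (hB : HTypeData B)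
    (A : G m n → Matrix (Fin m) (Fin m) ℝ) (hA : ∀ p, (A p).IsSymm) :
    ∀ p : G m n, p ≠ 0 →
      Lop B A hnorm p =
        (1 / hnorm p) *
          (((A p).trace • (1 : Matrix (Fin m) (Fin m) ℝ) - (3 : ℝ) • A p).mulVec
              (fun j => Xop B j hnorm p) ⬝ᵥ (fun j => Xop B j hnorm p)) +
        (2 / hnorm p ^ 3) *
          (quadForm (A p) p.1 + ∑ k, quadForm (A p) ((B k).mulVec p.1)) :=
  Lop_of_homogeneous_norm_general m n B hB A hA
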